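/- Assume the non-degeneracy condition and ‖W_n‖ ≤ 1 for all n, and let U₀ be an exact joint triangularizer of {M_n}. Set ε = γ/(2κ(V)⁴) with γ = min_{j<j'} Σ_{n=1}^N (Λ_{nj} − Λ_{nj'})², A_α = 32 Σ_{n=1}^N ‖M_n‖², and A_σ = 16 √N √(Σ_{n=1}^N ‖M_n‖²). Then there is a constant C > 0 (depending only on the M_n) such that for every skew-symmetric Y with ‖Y‖ = 1 and every α ≥ 0 with α ≤ (2ε − σ A_σ)/A_α − C(α + σ)², the Hessian of the loss L at U = U₀ exp(αY) is positive definite, i.e. d²/dt² L(U e^{tX})|_{t=0} > 0 for all nonzero skew-symmetric X. -/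

import Mathlib

open Matrix Kronecker BigOperators

noncomputable section

/-- Square real matrices. -/
abbrev Mat (d : ℕ) := Matrix (Fin d) (Fin d) ℝ

/-- Strictly lower-triangular part: `[low A]_{ij} = A_{ij}` if `i > j`, else `0`. -/
def lowPart {d : ℕ} (A : Mat d) : Mat d :=
  Matrix.of fun i j => if (j : ℕ) < (i : ℕ) then A i j else 0

/-- Frobenius norm. -/
def frob {m n : Type*} [Fintype m] [Fintype n] (A : Matrix m n ℝ) : ℝ :=
  Real.sqrt (∑ i, ∑ j, (A i j) ^ 2)

/-- Euclidean norm of a vector. -/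
def enorm' {m : Type*} [Fintype m] (v : m → ℝ) : ℝ :=
  Real.sqrt (∑ i, (v i) ^ 2)

/-- Largest singular value. -/
def sigMax {m n : Type*} [Fintype m] [Fintype n] (A : Matrix m n ℝ) : ℝ :=
  sSup {r | ∃ x : n → ℝ, enorm' x = 1 ∧ r = enorm' (A.mulVec x)}

/-- Smallest singular value. -/
def sigMin {m n : Type*} [Fintype m] [Fintype n] (A : Matrix m n ℝ) : ℝ :=
  sInf {r | ∃ x : n → ℝ, enorm' x = 1 ∧ r = enorm' (A.mulVec x)}

/-- Spectral norm (largest singular value). -/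
def specNorm {m n : Type*} [Fintype m] [Fintype n] (A : Matrix m n ℝ) : ℝ := sigMax A

/-- Condition number `κ(A) = σ_max(A)/σ_min(A)`. -/
def condNum {m n : Type*} [Fintype m] [Fintype n] (A : Matrix m n ℝ) : ℝ :=
  sigMax A / sigMin A

/-- Matrix exponential. -/
def matExp {d : ℕ} (A : Mat d) : Mat d := ∑' k : ℕ, ((k.factorial : ℝ))⁻¹ • A ^ k

/-- Column-wise vectorization: index `(j, i)` holds the `(i, j)` entry. -/
def vecM {d : ℕ} (A : Mat d) : Fin d × Fin d → ℝ := fun p => A p.2 p.1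

/-- Inverse of the column-wise vectorization. -/
def matM {d : ℕ} (v : Fin d × Fin d → ℝ) : Mat d := Matrix.of fun i j => v (j, i)

/-- The `d² × d²` diagonal 0/1 matrix `Low` with `Low (vec A) = vec (low A)`. -/
def lowOp (d : ℕ) : Matrix (Fin d × Fin d) (Fin d × Fin d) ℝ :=
  Matrix.diagonal fun p => if (p.1 : ℕ) < (p.2 : ℕ) then 1 else 0

/-- `P` is a valid `P_low` projector: `P Pᵀ = 1` and `Pᵀ P = Low`. -/
def IsPlow {d k : ℕ} (P : Matrix (Fin k) (Fin d × Fin d) ℝ) : Prop :=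
  P * Pᵀ = 1 ∧ Pᵀ * P = lowOp d

/-- Orthogonal matrix. -/
def IsOrtho {d : ℕ} (U : Mat d) : Prop := Uᵀ * U = 1

/-- Skew-symmetric matrix. -/
def IsSkew {d : ℕ} (X : Mat d) : Prop := Xᵀ = -X

/-- Matrix commutator. -/
def mcomm {d : ℕ} (A B : Mat d) : Mat d := A * B - B * A

/-- `U₀` is an exact joint triangularizer of the family `M`. -/
def ExactTriang {d N : ℕ} (U₀ : Mat d) (M : Fin N → Mat d) : Prop :=
  IsOrtho U₀ ∧ ∀ n, lowPart (U₀ᵀ * M n * U₀) = 0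

/-- The joint triangularization loss `L(U) = Σₙ ‖low(Uᵀ M̂ₙ U)‖²`. -/
def Loss {d N : ℕ} (Mh : Fin N → Mat d) (U : Mat d) : ℝ :=
  ∑ n, (frob (lowPart (Uᵀ * Mh n * U))) ^ 2

/-- Stationary point of the loss on the orthogonal group: the Riemannian
gradient vanishes, i.e. all directional derivatives along skew directions vanish. -/
def IsStationary' {d N : ℕ} (Mh : Fin N → Mat d) (U : Mat d) : Prop :=
  IsOrtho U ∧ ∀ X : Mat d, IsSkew X →
    deriv (fun t : ℝ => Loss Mh (U * matExp (t • X))) 0 = 0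

/-- The operator `t̃ = P_low (1 ⊗ Aᵀ − A ⊗ 1) P_lowᵀ`. -/
def ttil {d k : ℕ} (P : Matrix (Fin k) (Fin d × Fin d) ℝ) (A : Mat d) :
    Matrix (Fin k) (Fin k) ℝ :=
  P * ((1 : Mat d) ⊗ₖ Aᵀ - A ⊗ₖ (1 : Mat d)) * Pᵀ

/-- The joint eigengap `γ = min_{i<i'} Σₙ (Λ_{ni} − Λ_{ni'})²`. -/
def gapMin {d N : ℕ} (Λ : Fin N → Fin d → ℝ) : ℝ :=
  sInf {r | ∃ i i' : Fin d, i < i' ∧ r = ∑ n, (Λ n i - Λ n i') ^ 2}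

/-!
Along the geodesic `t ↦ U e^{tX}` the matrices `Aₙ(t) = e^{-tX} Uᵀ M̂ₙ U e^{tX}` satisfy
`Aₙ' = [Aₙ, X]`, so the Hessian of `L` at `U` is `2 Σₙ (‖low [Aₙ, X]‖² + ⟪low Aₙ, [[Aₙ, X], X]⟫)`
with `Aₙ = Uᵀ M̂ₙ U`. At `U₀` and `σ = 0` the `Tₙ = U₀ᵀ Mₙ U₀` are upper triangular, so the second
term vanishes. Their diagonals jointly separate indices: a generic combination `Σ cₙ Tₙ` is upper
triangular and similar to `diag (Σ cₙ Λₙ)`, whose entries are distinct. Hence `low [Tₙ, X] = 0`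
for all `n` kills the entries of `X` below the diagonal one subdiagonal at a time, and the Hessian
is positive at every nonzero skew `X`. It is continuous in `(α, σ, Y, W, X)`, so by compactness it
stays positive for `|α|, |σ| < δ`, uniformly in unit `Y` and `‖Wₙ‖ ≤ 1`. With `C = (B + 1) / δ²`,
where `B` bounds the threshold `(2ε − σ A_σ) / A_α`, the hypothesis on `α` forces `(α + σ)² < δ²`.
-/

section Separation

theorem exists_injective_sum_mul {ι κ K : Type*} [Finite ι] [Fintype κ] [Field K] [Infinite K]
    (Λ : κ → ι → K) (hΛ : ∀ i i', i ≠ i' → ∃ k, Λ k i ≠ Λ k i') :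
    ∃ c : κ → K, Function.Injective fun i => ∑ k, c k * Λ k i := by
  classical
  obtain ⟨f, hf⟩ := Module.exists_dual_forall_apply_ne_zero (K := K)
    (fun p : {p : ι × ι // p.1 ≠ p.2} => fun k => Λ k p.1.1 - Λ k p.1.2)
    (fun p hp => by
      obtain ⟨k, hk⟩ := hΛ _ _ p.2
      exact hk (sub_eq_zero.mp (congrFun hp k)))
  refine ⟨fun k => f fun j => if k = j then 1 else 0, fun i i' hii' => ?_⟩
  by_contra hne
  apply hf ⟨(i, i'), hne⟩
  rw [f.pi_apply_eq_sum_univ]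
  simp only [smul_eq_mul, sub_mul, Finset.sum_sub_distrib]
  exact sub_eq_zero.mpr (by simpa only [mul_comm] using hii')

variable {n K : Type*} [Fintype n] [DecidableEq n] [LinearOrder n] [Field K]

theorem Matrix.IsUpperTriangular.injective_diag_of_charpoly_eq {T : Matrix n n K}
    (hT : T.IsUpperTriangular) {v : n → K} (hv : Function.Injective v)
    (h : T.charpoly = (diagonal v).charpoly) : Function.Injective T.diag := by
  have hroots (w : n → K) : (∏ i, (Polynomial.X - Polynomial.C (w i))).roots =
      Finset.univ.val.map w := by
    have := Polynomial.roots_multiset_prod_X_sub_C (Finset.univ.val.map w)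
    rwa [Multiset.map_map, ← Finset.prod_eq_multiset_prod] at this
  have hmap := congrArg Polynomial.roots h
  rw [charpoly_of_isUpperTriangular T hT, charpoly_diagonal, hroots, hroots] at hmap
  have hnodup : (Finset.univ.val.map T.diag).Nodup := hmap ▸ Finset.univ.nodup.map hv
  exact fun i j hij => (Multiset.nodup_map_iff_inj_on Finset.univ.nodup).mp hnodup i
    (Finset.mem_univ _) j (Finset.mem_univ _) hij

theorem exists_diag_ne_of_isUpperTriangular_conj [Infinite K] {ι : Type*} [Fintype ι]
    {T : ι → Matrix n n K} (hT : ∀ k, (T k).IsUpperTriangular) {G : Matrix n n K} (hG : IsUnit G)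
    {Λ : ι → n → K} (hTΛ : ∀ k, T k = G * diagonal (Λ k) * G⁻¹)
    (hΛ : ∀ i i', i ≠ i' → ∃ k, Λ k i ≠ Λ k i') {i i' : n} (hii' : i ≠ i') :
    ∃ k, T k i i ≠ T k i' i' := by
  obtain ⟨c, hc⟩ := exists_injective_sum_mul Λ hΛ
  set S := ∑ k, c k • T k
  have hS : S.IsUpperTriangular := fun a b hab => by
    simp [S, Matrix.sum_apply, hT _ hab]
  have hSG : S = G * diagonal (fun i => ∑ k, c k * Λ k i) * G⁻¹ := by
    have : diagonal (fun i => ∑ k, c k * Λ k i) = ∑ k, c k • diagonal (Λ k) := by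
      ext a b
      by_cases hab : a = b <;> simp [Matrix.sum_apply, hab]
    simp [S, this, hTΛ, Finset.mul_sum, Finset.sum_mul]
  have hchar : S.charpoly = (diagonal fun i => ∑ k, c k * Λ k i).charpoly := by
    obtain ⟨u, rfl⟩ := hG
    rw [hSG, charpoly_units_conj]
  by_contra! hall
  exact hii' (hS.injective_diag_of_charpoly_eq hc hchar (by simp [S, Matrix.sum_apply, hall]))

end Separation

section Frobenius

open scoped Matrix.Norms.Frobenius

variable {m n : Type*} [Fintype m] [Fintype n]

theorem frob_eq_norm (A : Matrix m n ℝ) : frob A = ‖A‖ := by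
  rw [frob, frobenius_norm_def, Real.sqrt_eq_rpow]
  simp [Real.norm_eq_abs, sq_abs]

theorem frob_smul (c : ℝ) (A : Matrix m n ℝ) : frob (c • A) = |c| * frob A := by
  rw [frob_eq_norm, frob_eq_norm, norm_smul, Real.norm_eq_abs]

theorem frob_eq_zero_iff {A : Matrix m n ℝ} : frob A = 0 ↔ A = 0 := by
  rw [frob_eq_norm, norm_eq_zero]

theorem frob_pos {A : Matrix m n ℝ} (hA : A ≠ 0) : 0 < frob A := by
  rw [frob_eq_norm]
  exact norm_pos_iff.mpr hA

theorem abs_apply_le_frob (A : Matrix m n ℝ) (i : m) (j : n) : |A i j| ≤ frob A := by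
  rw [frob, ← Real.sqrt_sq_eq_abs]
  refine Real.sqrt_le_sqrt ?_
  calc A i j ^ 2 ≤ ∑ j', A i j' ^ 2 :=
        Finset.single_le_sum (fun j' _ => sq_nonneg (A i j')) (Finset.mem_univ j)
    _ ≤ ∑ i', ∑ j', A i' j' ^ 2 :=
        Finset.single_le_sum (f := fun i' => ∑ j', A i' j' ^ 2) (fun i' _ => by positivity)
          (Finset.mem_univ i)

end Frobenius

section Hessian

variable {d N : ℕ}

theorem lowPart_eq_zero_iff {A : Mat d} : lowPart A = 0 ↔ A.IsUpperTriangular := by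
  constructor
  · intro h i j hji
    have hij := congrFun (congrFun h i) j
    rwa [lowPart, of_apply, Matrix.zero_apply, if_pos (show (j : ℕ) < i from hji)] at hij
  · intro h
    ext i j
    rw [lowPart, of_apply, Matrix.zero_apply]
    split_ifs with hji
    exacts [h hji, rfl]

theorem IsSkew.eq_zero_of_isUpperTriangular {X : Mat d} (hX : IsSkew X)
    (hU : X.IsUpperTriangular) : X = 0 := by
  ext i j
  have hji : X i j = -X j i := by simpa using congrFun (congrFun hX j) i
  rcases lt_trichotomy i j with h | rfl | h
  · rw [hji, hU h, neg_zero, Matrix.zero_apply]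
  · rw [Matrix.zero_apply]
    linarith
  · exact hU h

theorem isUpperTriangular_of_isUpperTriangular_mcomm {ι : Type*} {T : ι → Mat d}
    (hT : ∀ k, (T k).IsUpperTriangular) (hsep : ∀ i j : Fin d, i ≠ j → ∃ k, T k i i ≠ T k j j)
    {X : Mat d} (hX : ∀ k, (mcomm (T k) X).IsUpperTriangular) : X.IsUpperTriangular := by
  -- induction over the subdiagonals of `X`, starting from the corner entry `X (d - 1) 0`
  have key : ∀ m : ℕ, ∀ i j : Fin d, j < i → d ≤ (i : ℕ) - j + m → X i j = 0 := by
    intro m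
    induction m with
    | zero => intro i j _ h; omega
    | succ m ih =>
      intro i j hji hm
      have hfar : ∀ p q : Fin d, q < p → (i : ℕ) - j < (p : ℕ) - q → X p q = 0 :=
        fun p q hqp h => ih p q hqp (by omega)
      obtain ⟨k, hk⟩ := hsep i j hji.ne'
      have hcomm : mcomm (T k) X i j = (T k i i - T k j j) * X i j := by
        rw [mcomm, Matrix.sub_apply, mul_apply, mul_apply, Finset.sum_eq_single i,
          Finset.sum_eq_single j]
        · ring
        · intro l _ hl
          rcases lt_or_gt_of_ne hl with h | h
          · rw [hfar i l (h.trans hji) (by omega), zero_mul]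
          · rw [hT k h, mul_zero]
        · simp
        · intro l _ hl
          rcases lt_or_gt_of_ne hl with h | h
          · rw [hT k h, zero_mul]
          · rw [hfar l j (hji.trans h) (by omega), mul_zero]
        · simp
      have h0 : (T k i i - T k j j) * X i j = 0 := hcomm ▸ hX k hji
      exact (mul_eq_zero.mp h0).resolve_left (sub_ne_zero.mpr hk)
  exact fun i j hji => key d i j hji (by omega)

def lowInner (A B : Mat d) : ℝ :=
  ∑ i, ∑ j, if j < i then A i j * B i j else 0

theorem frob_lowPart_sq (A : Mat d) : frob (lowPart A) ^ 2 = lowInner A A := by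
  rw [frob, Real.sq_sqrt (by positivity)]
  refine Finset.sum_congr rfl fun i _ => Finset.sum_congr rfl fun j _ => ?_
  simp only [lowPart, of_apply, Fin.val_fin_lt]
  split_ifs <;> ring

theorem lowInner_self_nonneg (A : Mat d) : 0 ≤ lowInner A A := by
  rw [← frob_lowPart_sq]
  positivity

theorem lowInner_self_eq_zero_iff {A : Mat d} : lowInner A A = 0 ↔ A.IsUpperTriangular := by
  rw [← frob_lowPart_sq, sq_eq_zero_iff, frob_eq_zero_iff, lowPart_eq_zero_iff]

theorem lowInner_eq_zero_of_isUpperTriangular {A : Mat d} (hA : A.IsUpperTriangular)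
    (B : Mat d) : lowInner A B = 0 :=
  Finset.sum_eq_zero fun i _ => Finset.sum_eq_zero fun j _ => by
    split_ifs with h
    · rw [hA h, zero_mul]
    · rfl

theorem lowInner_comm (A B : Mat d) : lowInner A B = lowInner B A := by
  simp only [lowInner, mul_comm]

theorem lowInner_smul_left (c : ℝ) (A B : Mat d) : lowInner (c • A) B = c * lowInner A B := by
  simp only [lowInner, Finset.mul_sum, Matrix.smul_apply, smul_eq_mul, mul_ite, mul_zero,
    mul_assoc]

theorem lowInner_smul_right (c : ℝ) (A B : Mat d) : lowInner A (c • B) = c * lowInner A B := by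
  rw [lowInner_comm, lowInner_smul_left, lowInner_comm]

theorem mcomm_smul_left (c : ℝ) (A X : Mat d) : mcomm (c • A) X = c • mcomm A X := by
  simp only [mcomm, Matrix.smul_mul, Matrix.mul_smul, smul_sub]

theorem mcomm_smul_right (c : ℝ) (A X : Mat d) : mcomm A (c • X) = c • mcomm A X := by
  simp only [mcomm, Matrix.smul_mul, Matrix.mul_smul, smul_sub]

def lossHessian (A : Fin N → Mat d) (X : Mat d) : ℝ :=
  ∑ n, 2 * (lowInner (mcomm (A n) X) (mcomm (A n) X) + lowInner (A n) (mcomm (mcomm (A n) X) X))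

theorem lossHessian_smul (A : Fin N → Mat d) (c : ℝ) (X : Mat d) :
    lossHessian A (c • X) = c ^ 2 * lossHessian A X := by
  simp only [lossHessian, mcomm_smul_right, mcomm_smul_left, lowInner_smul_left,
    lowInner_smul_right, Finset.mul_sum]
  exact Finset.sum_congr rfl fun n _ => by ring

theorem lossHessian_pos {T : Fin N → Mat d} (hT : ∀ n, (T n).IsUpperTriangular)
    (hsep : ∀ i j : Fin d, i ≠ j → ∃ n, T n i i ≠ T n j j) {X : Mat d} (hX : IsSkew X)
    (hX0 : X ≠ 0) : 0 < lossHessian T X := by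
  obtain ⟨n, hn⟩ : ∃ n, lowInner (mcomm (T n) X) (mcomm (T n) X) ≠ 0 := by
    by_contra! h
    exact hX0 (hX.eq_zero_of_isUpperTriangular (isUpperTriangular_of_isUpperTriangular_mcomm hT
      hsep fun n => lowInner_self_eq_zero_iff.mp (h n)))
  simp only [lossHessian, lowInner_eq_zero_of_isUpperTriangular (hT _), add_zero]
  exact Finset.sum_pos' (fun n _ => mul_nonneg zero_le_two (lowInner_self_nonneg _))
    ⟨n, Finset.mem_univ _, mul_pos two_pos ((lowInner_self_nonneg _).lt_of_ne' hn)⟩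

theorem continuous_lossHessian :
    Continuous fun p : (Fin N → Mat d) × Mat d => lossHessian p.1 p.2 := by
  unfold lossHessian lowInner mcomm
  refine continuous_finsetSum _ fun n _ => continuous_const.mul (.add ?_ ?_) <;>
  exact continuous_finsetSum _ fun i _ => continuous_finsetSum _ fun j _ => by
    split_ifs
    · fun_prop
    · exact continuous_const

end Hessian

section Derivative

open scoped Matrix.Norms.Frobenius

variable {d N : ℕ}

theorem matExp_eq_exp (A : Mat d) : matExp A = NormedSpace.exp A := by
  rw [NormedSpace.exp_eq_tsum ℝ]
  rfl

theorem matExp_zero : matExp (0 : Mat d) = 1 := by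
  rw [matExp_eq_exp, NormedSpace.exp_zero]

theorem HasDerivAt.matrix_apply {F : ℝ → Mat d} {F' : Mat d} {t : ℝ} (hF : HasDerivAt F F' t)
    (i j : Fin d) : HasDerivAt (fun s => F s i j) (F' i j) t :=
  (entryLinearMap ℝ ℝ i j).toContinuousLinearMap.hasFDerivAt.comp_hasDerivAt t hF

theorem HasDerivAt.lowInner {F G : ℝ → Mat d} {F' G' : Mat d} {t : ℝ} (hF : HasDerivAt F F' t)
    (hG : HasDerivAt G G' t) :
    HasDerivAt (fun s => lowInner (F s) (G s)) (lowInner F' (G t) + lowInner (F t) G') t := by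
  simp only [_root_.lowInner, ← Finset.sum_add_distrib]
  refine HasDerivAt.fun_sum fun i _ => HasDerivAt.fun_sum fun j _ => ?_
  by_cases h : j < i
  · simpa only [h, if_true] using (hF.matrix_apply i j).fun_mul (hG.matrix_apply i j)
  · simpa only [h, if_false, add_zero] using hasDerivAt_const t (0 : ℝ)

theorem hasDerivAt_transpose_exp_mul_mul_exp (C : Mat d) {X : Mat d} (hX : IsSkew X) (t : ℝ) :
    HasDerivAt (fun s : ℝ => (matExp (s • X))ᵀ * C * matExp (s • X))
      (mcomm ((matExp (t • X))ᵀ * C * matExp (t • X)) X) t := by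
  have hE : HasDerivAt (fun s : ℝ => matExp (s • X)) (matExp (t • X) * X) t := by
    simp only [matExp_eq_exp]
    exact hasDerivAt_exp_smul_const X t
  have hET : HasDerivAt (fun s : ℝ => (matExp (s • X))ᵀ) (Xᵀ * (matExp (t • X))ᵀ) t := by
    simp only [matExp_eq_exp, ← Matrix.exp_transpose, transpose_smul]
    exact hasDerivAt_exp_smul_const' Xᵀ t
  refine ((hET.mul_const C).fun_mul hE).congr_deriv ?_
  rw [mcomm, hX]
  noncomm_ring

theorem iteratedDeriv_two_loss (Mh : Fin N → Mat d) (U : Mat d) {X : Mat d} (hX : IsSkew X) :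
    iteratedDeriv 2 (fun t : ℝ => Loss Mh (U * matExp (t • X))) 0 =
      lossHessian (fun n => Uᵀ * Mh n * U) X := by
  set F : Fin N → ℝ → Mat d := fun n t => (matExp (t • X))ᵀ * (Uᵀ * Mh n * U) * matExp (t • X)
  have hF n t : HasDerivAt (F n) (mcomm (F n t) X) t :=
    hasDerivAt_transpose_exp_mul_mul_exp _ hX t
  have hG n t : HasDerivAt (fun s => mcomm (F n s) X) (mcomm (mcomm (F n t) X) X) t :=
    ((hF n t).mul_const X).sub ((hF n t).const_mul X)
  have hloss : (fun t : ℝ => Loss Mh (U * matExp (t • X))) =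
      fun t => ∑ n, lowInner (F n t) (F n t) := by
    funext t
    refine Finset.sum_congr rfl fun n _ => ?_
    rw [frob_lowPart_sq]
    simp only [F, transpose_mul, Matrix.mul_assoc]
  have h1 t : HasDerivAt (fun t => ∑ n, lowInner (F n t) (F n t))
      (∑ n, 2 * lowInner (F n t) (mcomm (F n t) X)) t :=
    (HasDerivAt.fun_sum fun n _ => (hF n t).lowInner (hF n t)).congr_deriv
      (Finset.sum_congr rfl fun n _ => by rw [lowInner_comm]; ring)
  have h2 : HasDerivAt (fun t => ∑ n, 2 * lowInner (F n t) (mcomm (F n t) X))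
      (lossHessian (fun n => F n 0) X) 0 :=
    HasDerivAt.fun_sum fun n _ => ((hF n 0).lowInner (hG n 0)).const_mul 2
  have hF0 : (fun n => F n 0) = fun n => Uᵀ * Mh n * U := by
    simp [F, matExp_zero]
  rw [iteratedDeriv_succ, iteratedDeriv_one, hloss, funext fun t => (h1 t).deriv, h2.deriv, hF0]

end Derivative

section Compactness

open scoped Topology

variable {d N : ℕ}

@[fun_prop]
theorem continuous_matExp : Continuous (matExp : Mat d → Mat d) := by
  open scoped Matrix.Norms.Frobenius in
  simp only [funext matExp_eq_exp]
  exact NormedSpace.exp_continuous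

theorem continuous_frob {m n : Type*} [Fintype m] [Fintype n] :
    Continuous (frob : Matrix m n ℝ → ℝ) :=
  Real.continuous_sqrt.comp (by fun_prop)

theorem isCompact_frob_le (r : ℝ) : IsCompact {A : Mat d | frob A ≤ r} := by
  have hbox : IsCompact (Set.univ.pi fun _ : Fin d => Set.univ.pi fun _ : Fin d =>
      Set.Icc (-r) r) :=
    isCompact_univ_pi fun _ => isCompact_univ_pi fun _ => isCompact_Icc
  exact hbox.of_isClosed_subset (isClosed_le continuous_frob continuous_const)
    fun A hA i _ j _ => abs_le.mp ((abs_apply_le_frob A i j).trans hA)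

theorem IsCompact.eventually_forall_pos {X Y : Type*} [TopologicalSpace X] [TopologicalSpace Y]
    {K : Set Y} (hK : IsCompact K) {f : X × Y → ℝ} (hf : Continuous f) {x₀ : X}
    (h : ∀ y ∈ K, 0 < f (x₀, y)) : ∀ᶠ x in 𝓝 x₀, ∀ y ∈ K, 0 < f (x, y) :=
  hK.eventually_forall_of_forall_eventually fun y hy =>
    hf.continuousAt.eventually (lt_mem_nhds (h y hy))

theorem eventually_lossHessian_pos (M : Fin N → Mat d) (U₀ : Mat d)
    (hpos : ∀ X, IsSkew X → X ≠ 0 → 0 < lossHessian (fun n => U₀ᵀ * M n * U₀) X) :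
    ∀ᶠ p : ℝ × ℝ in 𝓝 0, ∀ Y : Mat d, frob Y = 1 → ∀ W : Fin N → Mat d,
      (∀ n, frob (W n) ≤ 1) → ∀ X, IsSkew X → X ≠ 0 →
        0 < lossHessian (fun n => (U₀ * matExp (p.1 • Y))ᵀ * (M n + p.2 • W n) *
          (U₀ * matExp (p.1 • Y))) X := by
  set S : Set (Mat d) := {A | frob A = 1}
  have hS : IsCompact S := (isCompact_frob_le 1).of_isClosed_subset
    (isClosed_eq continuous_frob continuous_const) fun A hA => hA.le
  set K : Set (Mat d × (Fin N → Mat d) × Mat d) :=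
    S ×ˢ Set.univ.pi (fun _ => {A | frob A ≤ 1}) ×ˢ ({X | IsSkew X} ∩ S)
  have hK : IsCompact K := hS.prod ((isCompact_univ_pi fun _ => isCompact_frob_le 1).prod
    (hS.inter_left (isClosed_eq continuous_id.matrix_transpose continuous_neg)))
  set f : (ℝ × ℝ) × (Mat d × (Fin N → Mat d) × Mat d) → ℝ := fun q =>
    lossHessian (fun n => (U₀ * matExp (q.1.1 • q.2.1))ᵀ * (M n + q.1.2 • q.2.2.1 n) *
      (U₀ * matExp (q.1.1 • q.2.1))) q.2.2.2
  have hA : Continuous fun q : (ℝ × ℝ) × (Mat d × (Fin N → Mat d) × Mat d) =>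
      fun n => (U₀ * matExp (q.1.1 • q.2.1))ᵀ * (M n + q.1.2 • q.2.2.1 n) *
        (U₀ * matExp (q.1.1 • q.2.1)) := by
    fun_prop
  have hf : Continuous f := (continuous_lossHessian.comp (hA.prodMk continuous_snd.snd.snd) :)
  have h0 : ∀ y ∈ K, 0 < f (0, y) := by
    rintro ⟨Y, W, X⟩ ⟨-, -, hX, hX1⟩
    have hX0 : X ≠ 0 := by
      rintro rfl
      simp [S, frob] at hX1
    simpa [f, matExp_zero] using hpos X hX hX0
  filter_upwards [hK.eventually_forall_pos hf h0] with p hp Y hY W hW X hX hX0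
  have hXn : 0 < frob X := frob_pos hX0
  have hXK : (Y, W, (frob X)⁻¹ • X) ∈ K := by
    refine ⟨hY, fun n _ => hW n, ?_, ?_⟩
    · show ((frob X)⁻¹ • X)ᵀ = -((frob X)⁻¹ • X)
      rw [transpose_smul, hX, smul_neg]
    · simp only [S, Set.mem_ofPred_eq, frob_smul, abs_inv, abs_of_pos hXn,
        inv_mul_cancel₀ hXn.ne']
  have hpX := hp _ hXK
  simp only [f] at hpX
  rw [show X = frob X • ((frob X)⁻¹ • X) by rw [smul_smul, mul_inv_cancel₀ hXn.ne', one_smul],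
    lossHessian_smul]
  exact mul_pos (by positivity) hpX

end Compactness

theorem lt_and_lt_of_le_threshold {α σ ε Aσ Aα δ : ℝ} (hδ : 0 < δ) (hAσ : 0 ≤ Aσ) (hAα : 0 ≤ Aα)
    (hα : 0 ≤ α) (hσ : 0 < σ)
    (h : α ≤ (2 * ε - σ * Aσ) / Aα - (|2 * ε| / Aα + 1) / δ ^ 2 * (α + σ) ^ 2) :
    α < δ ∧ σ < δ := by
  set B := |2 * ε| / Aα
  have hB : 0 ≤ B := by positivity
  have hthr : (2 * ε - σ * Aσ) / Aα ≤ B :=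
    div_le_div_of_nonneg_right (by nlinarith [le_abs_self (2 * ε)]) hAα
  have hsq : (α + σ) ^ 2 < δ ^ 2 := by
    by_contra! hge
    have : B + 1 ≤ (B + 1) / δ ^ 2 * (α + σ) ^ 2 := by
      rw [div_mul_eq_mul_div, le_div_iff₀ (by positivity)]
      exact mul_le_mul_of_nonneg_left hge (by linarith)
    linarith
  have := lt_of_pow_lt_pow_left₀ 2 hδ.le hsq
  constructor <;> linarith

/-- positive definiteness of the Hessian of the loss at
`U = U₀ exp(αY)` for `α` below the threshold `(2ε − σA_σ)/A_α` (up to second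
order terms). -/
theorem hessian_positive_definite {d N : ℕ} (V : Mat d) (hV : IsUnit V)
    (Λ : Fin N → Fin d → ℝ) (M : Fin N → Mat d)
    (hM : ∀ n, M n = V * Matrix.diagonal (Λ n) * V⁻¹)
    (hnd : ∀ i i' : Fin d, i ≠ i' → ∃ n, Λ n i ≠ Λ n i')
    (U₀ : Mat d) (hU₀ : ExactTriang U₀ M) :
    ∃ C > (0 : ℝ), ∀ σ : ℝ, 0 < σ →
      ∀ W : Fin N → Mat d, (∀ n, frob (W n) ≤ 1) →
        ∀ Y : Mat d, IsSkew Y → frob Y = 1 →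
          ∀ α : ℝ, 0 ≤ α →
            α ≤ (2 * (gapMin Λ / (2 * condNum V ^ 4)) -
                  σ * (16 * Real.sqrt (N : ℝ) * Real.sqrt (∑ n, frob (M n) ^ 2))) /
                (32 * ∑ n, frob (M n) ^ 2) - C * (α + σ) ^ 2 →
            ∀ X : Mat d, IsSkew X → X ≠ 0 →
              0 < iteratedDeriv 2
                    (fun t : ℝ => Loss (fun n => M n + σ • W n)
                      ((U₀ * matExp (α • Y)) * matExp (t • X))) 0 := by
  obtain ⟨hU₀o, hU₀low⟩ := hU₀
  have hT n : (U₀ᵀ * M n * U₀).IsUpperTriangular := lowPart_eq_zero_iff.mp (hU₀low n)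
  have hG : IsUnit (U₀ᵀ * V) :=
    ((isUnit_iff_isUnit_det _).mpr (isUnit_det_of_right_inverse hU₀o)).mul hV
  have hTΛ n : U₀ᵀ * M n * U₀ = U₀ᵀ * V * diagonal (Λ n) * (U₀ᵀ * V)⁻¹ := by
    simp only [hM, Matrix.mul_inv_rev, inv_eq_right_inv hU₀o, Matrix.mul_assoc]
  have hpos X (hX : IsSkew X) (hX0 : X ≠ 0) : 0 < lossHessian (fun n => U₀ᵀ * M n * U₀) X :=
    lossHessian_pos hT (fun _ _ => exists_diag_ne_of_isUpperTriangular_conj hT hG hTΛ hnd) hX hX0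
  obtain ⟨δ, hδ, hnear⟩ := Metric.eventually_nhds_iff.mp (eventually_lossHessian_pos M U₀ hpos)
  refine ⟨(|2 * (gapMin Λ / (2 * condNum V ^ 4))| / (32 * ∑ n, frob (M n) ^ 2) + 1) / δ ^ 2,
    by positivity, fun σ hσ W hW Y _ hY α hα hαle X hX hX0 => ?_⟩
  obtain ⟨hαδ, hσδ⟩ := lt_and_lt_of_le_threshold hδ (by positivity) (by positivity) hα hσ hαle
  rw [iteratedDeriv_two_loss _ _ hX]
  refine hnear (y := (α, σ)) ?_ Y hY W hW X hX hX0
  simpa [Prod.dist_eq, abs_of_nonneg hα, abs_of_pos hσ] using ⟨hαδ, hσδ⟩
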